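/- Suppose the support preservation property holds: for a fixed observation matrix family, if G(θ)^{(i,j)} = 0 for some parameter θ then G(θ*)^{(i,j)} = 0 (where θ* is the data-generating parameter), and suppose x is a one-hot random state with law q ∈ Δ_M such that whenever the filter vector π(θ)^{(i)} = 0 we have q^{(i)} = 0. Let y ∼ Cat((xᵀ G(θ*))ᵀ) given x, and μ(θ) := (π(θ)ᵀ G(θ))ᵀ. Then ℙ( yᵀ μ(θ) = 0 ) = 0; i.e., the categorical approximate likelihood increment is almost surely strictly positive. -/
import Mathlib


/-- Almost sure positivity of the categorical approximate likelihood increment under support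
preservation: if `G(θ)^{(i,j)} = 0` implies `G(θ*)^{(i,j)} = 0`, if the true state law `q`
vanishes wherever the filter vector `π(θ)` vanishes, and if `y ∼ Cat((xᵀG(θ*))ᵀ)` given
`x ∼ Cat(q)`, then the probability that `y` lands in a component where
`μ(θ) = (π(θ)ᵀG(θ))ᵀ` vanishes is zero, i.e. `ℙ(yᵀμ(θ) = 0) = 0`. -/
theorem stmt16 {M : ℕ}
    (q πθ : Fin M → ℝ) (Gθ Gstar : Matrix (Fin M) (Fin (M + 1)) ℝ)
    (hq0 : ∀ i, 0 ≤ q i) (hq1 : ∑ i, q i = 1)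
    (hπ0 : ∀ i, 0 ≤ πθ i) (hπ1 : ∑ i, πθ i = 1)
    (hGθ0 : ∀ i j, 0 ≤ Gθ i j) (hGθ1 : ∀ i, ∑ j, Gθ i j = 1)
    (hGs0 : ∀ i j, 0 ≤ Gstar i j) (hGs1 : ∀ i, ∑ j, Gstar i j = 1)
    (hsupp : ∀ i j, Gθ i j = 0 → Gstar i j = 0)
    (hqsupp : ∀ i, πθ i = 0 → q i = 0)
    (μθ : Fin (M + 1) → ℝ) (hμθ : ∀ j, μθ j = ∑ i, πθ i * Gθ i j) :
    (∑ j : Fin (M + 1), if μθ j = 0 then ∑ i, q i * Gstar i j else 0) = 0 := by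
  refine Finset.sum_eq_zero fun j _ => ?_
  split_ifs with h
  · refine Finset.sum_eq_zero fun i _ => ?_
    rw [hμθ j] at h
    have hz : πθ i * Gθ i j = 0 :=
      (Finset.sum_eq_zero_iff_of_nonneg fun k _ => mul_nonneg (hπ0 k) (hGθ0 k j)).mp h i
        (Finset.mem_univ i)
    rcases mul_eq_zero.mp hz with h1 | h2
    · rw [hqsupp i h1, zero_mul]
    · rw [hsupp i j h2, mul_zero]
  · rfl
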